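/- Let H be a separable complex Hilbert space and let P, Q be orthogonal projections on H with ‖P − Q‖ < 1. Then the Sz.-Nagy operator W := (1 − (P − Q)²)^{-1/2} (P Q + (1 − P)(1 − Q)) is a unitary operator on H satisfying W Q W⁻¹ = P. -/
import Mathlib


open ContinuousLinearMap
open scoped InnerProductSpace

private lemma nagy_comm_inv {A : Type*} [Ring A] {a b x : A}
    (h1 : a * b = 1) (h2 : b * a = 1) (hx : x * a = a * x) : x * b = b * x := by
  calc x * b = 1 * (x * b) := (one_mul _).symm
    _ = b * ((a * x) * b) := by rw [← h2]; simp only [mul_assoc]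
    _ = b * ((x * a) * b) := by rw [hx]
    _ = (b * x) * (a * b) := by simp only [mul_assoc]
    _ = b * x := by rw [h1, mul_one]

set_option maxHeartbeats 2000000 in
/-- **Sz.-Nagy's lemma.** If `P, Q` are orthogonal projections on a separable complex
Hilbert space with `‖P - Q‖ < 1`, then the operator
`W := (1 - (P - Q)²)^{-1/2} (P Q + (1 - P)(1 - Q))` is unitary and `W Q W⁻¹ = P`. -/
theorem nagy_formula {H : Type*} [NormedAddCommGroup H] [InnerProductSpace ℂ H]
    [CompleteSpace H] [TopologicalSpace.SeparableSpace H]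
    (P Q : H →L[ℂ] H)
    (hP : IsSelfAdjoint P) (hP2 : P * P = P)
    (hQ : IsSelfAdjoint Q) (hQ2 : Q * Q = Q)
    (hPQ : ‖P - Q‖ < 1)
    (W : H →L[ℂ] H)
    (hW : W = cfc Real.sqrt (Ring.inverse (1 - (P - Q) ^ 2)) *
      (P * Q + (1 - P) * (1 - Q))) :
    W ∈ unitary (H →L[ℂ] H) ∧ W * Q * star W = P := by
  have hP2' : ∀ x : H →L[ℂ] H, P * (P * x) = P * x := fun x => by rw [← mul_assoc, hP2]
  have hQ2' : ∀ x : H →L[ℂ] H, Q * (Q * x) = Q * x := fun x => by rw [← mul_assoc, hQ2]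
  set D : H →L[ℂ] H := (P - Q) ^ 2 with hDdef
  set T : H →L[ℂ] H := P * Q + (1 - P) * (1 - Q) with hTdef
  have hDexp : D = P + Q - P * Q - Q * P := by
    have h : (P - Q) ^ 2 = P * P + Q * Q - P * Q - Q * P := by noncomm_ring
    rw [hDdef, h, hP2, hQ2]
  have hDsa : IsSelfAdjoint D := ((hP.sub hQ).pow 2)
  have hDnorm : ‖D‖ < 1 := by
    have h0 := norm_nonneg (P - Q)
    calc ‖D‖ = ‖(P - Q) * (P - Q)‖ := by rw [hDdef, sq]
      _ ≤ ‖P - Q‖ * ‖P - Q‖ := norm_mul_le _ _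
      _ < 1 := by nlinarith
  have hDnn : 0 ≤ D := by
    have h : D = star (P - Q) * (P - Q) := by rw [hDdef, sq, (hP.sub hQ).star_eq]
    rw [h]; exact star_mul_self_nonneg _
  have key : ∀ r : ℝ, 0 ≤ r → (0 : H →L[ℂ] H) ≤ algebraMap ℝ (H →L[ℂ] H) r := by
    intro r hr
    have h : algebraMap ℝ (H →L[ℂ] H) r
        = star (algebraMap ℝ (H →L[ℂ] H) (Real.sqrt r)) *
          algebraMap ℝ (H →L[ℂ] H) (Real.sqrt r) := by
      rw [← algebraMap_star_comm, star_trivial, ← map_mul, Real.mul_self_sqrt hr]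
    rw [h]; exact star_mul_self_nonneg _
  have h1Dnn : (0 : H →L[ℂ] H) ≤ 1 - D := by
    have h2 : D ≤ algebraMap ℝ (H →L[ℂ] H) ‖D‖ := hDsa.le_algebraMap_norm_self
    have h3 : algebraMap ℝ (H →L[ℂ] H) ‖D‖ ≤ 1 := by
      calc algebraMap ℝ (H →L[ℂ] H) ‖D‖
          ≤ algebraMap ℝ (H →L[ℂ] H) ‖D‖ + algebraMap ℝ (H →L[ℂ] H) (1 - ‖D‖) :=
            le_add_of_nonneg_right (key _ (by linarith))
        _ = 1 := by rw [← map_add]; norm_num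
    exact sub_nonneg.mpr (h2.trans h3)
  have hU : IsUnit ((1 : H →L[ℂ] H) - D) := isUnit_one_sub_of_norm_lt_one hDnorm
  set B : H →L[ℂ] H := Ring.inverse (1 - D) with hBdef
  have hB1 : ((1 : H →L[ℂ] H) - D) * B = 1 := Ring.mul_inverse_cancel _ hU
  have hB2 : B * ((1 : H →L[ℂ] H) - D) = 1 := Ring.inverse_mul_cancel _ hU
  have h1Dsa : star ((1 : H →L[ℂ] H) - D) = 1 - D := by
    rw [star_sub, star_one, hDsa.star_eq]
  have hBsa : IsSelfAdjoint B := by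
    rw [hBdef, IsSelfAdjoint, ← Ring.inverse_star, h1Dsa]
  have hBnn : (0 : H →L[ℂ] H) ≤ B := by
    have h : B = star B * (1 - D) * B := by
      rw [hBsa.star_eq, mul_assoc, hB1, mul_one]
    rw [h]; exact star_left_conjugate_nonneg h1Dnn B
  -- commutation of D with P, Q, T
  have hPD : P * D = D * P := by
    rw [hDexp]
    simp only [mul_add, add_mul, mul_sub, sub_mul, mul_assoc, hP2, hQ2, hP2', hQ2']
    abel
  have hQD : Q * D = D * Q := by
    rw [hDexp]
    simp only [mul_add, add_mul, mul_sub, sub_mul, mul_assoc, hP2, hQ2, hP2', hQ2']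
    abel
  have hTexp : T = 1 - P - Q + (P * Q + P * Q) := by rw [hTdef]; noncomm_ring
  have hTstar : star T = 1 - P - Q + (Q * P + Q * P) := by
    rw [hTexp]
    simp only [star_add, star_sub, star_one, star_mul, hP.star_eq, hQ.star_eq]
  have cDP : Commute D P := hPD.symm
  have cDQ : Commute D Q := hQD.symm
  have cDT : Commute D T := by
    rw [hTexp]
    exact (((Commute.one_right D).sub_right cDP).sub_right cDQ).add_right
      (((cDP.mul_right cDQ)).add_right ((cDP.mul_right cDQ)))
  have hTTstar : T * star T = 1 - D := by
    rw [hTstar, hTexp, hDexp]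
    simp only [mul_add, add_mul, mul_sub, sub_mul, mul_one, one_mul, mul_assoc,
      hP2, hQ2, hP2', hQ2']
    abel
  have hTstarT : star T * T = 1 - D := by
    rw [hTstar, hTexp, hDexp]
    simp only [mul_add, add_mul, mul_sub, sub_mul, mul_one, one_mul, mul_assoc,
      hP2, hQ2, hP2', hQ2']
    abel
  have hPT : P * T = T * Q := by
    rw [hTexp]
    simp only [mul_add, add_mul, mul_sub, sub_mul, mul_one, one_mul, mul_assoc,
      hP2, hQ2, hP2', hQ2']
    abel
  -- commutation with B
  have h1DT : T * (1 - D) = (1 - D) * T := by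
    simp only [mul_sub, sub_mul, mul_one, one_mul, cDT.symm.eq]
  have h1DP : P * (1 - D) = (1 - D) * P := by
    simp only [mul_sub, sub_mul, mul_one, one_mul, hPD]
  have hBT : T * B = B * T := nagy_comm_inv hB1 hB2 h1DT
  have hBP : P * B = B * P := nagy_comm_inv hB1 hB2 h1DP
  -- the square root
  set R : H →L[ℂ] H := cfc Real.sqrt B with hRdef
  have hRnn : (0 : H →L[ℂ] H) ≤ R := by
    rw [hRdef]
    exact cfc_nonneg fun x _ => Real.sqrt_nonneg x
  have hRsa : IsSelfAdjoint R := hRnn.isSelfAdjoint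
  have hRR : R * R = B := by
    rw [hRdef, ← cfc_mul Real.sqrt Real.sqrt B]
    have hcongr : (spectrum ℝ B).EqOn (fun x => Real.sqrt x * Real.sqrt x) id := by
      intro x hx
      exact Real.mul_self_sqrt (spectrum_nonneg_of_nonneg hBnn hx)
    rw [cfc_congr hcongr, cfc_id ℝ B]
  have hRB : R * B = B * R := by
    have h := cfc_commute_cfc Real.sqrt (id : ℝ → ℝ) B
    rw [cfc_id ℝ B] at h
    exact h
  have hR1D : R * (1 - D) = (1 - D) * R := nagy_comm_inv hB2 hB1 hRB
  -- R commutes with P via the symmetry V = P + P - 1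
  have hRP : R * P = P * R := by
    set V : H →L[ℂ] H := P + P - 1 with hVdef
    have hVsa : IsSelfAdjoint V := by
      rw [hVdef, IsSelfAdjoint, star_sub, star_add, star_one, hP.star_eq]
    have hV2 : V * V = 1 := by
      rw [hVdef]
      simp only [mul_add, add_mul, mul_sub, sub_mul, mul_one, one_mul, mul_assoc,
        hP2, hQ2, hP2', hQ2']
      abel
    have hVB : V * B = B * V := by
      rw [hVdef]
      simp only [add_mul, mul_add, sub_mul, mul_sub, one_mul, mul_one, hBP]
    have hSnn : (0 : H →L[ℂ] H) ≤ V * R * V := by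
      have h := star_left_conjugate_nonneg hRnn V
      rwa [hVsa.star_eq] at h
    have hSS : (V * R * V) * (V * R * V) = B := by
      calc (V * R * V) * (V * R * V) = V * (R * ((V * V) * R)) * V := by
            simp only [mul_assoc]
        _ = V * (R * R) * V := by rw [hV2, one_mul, ← mul_assoc]
        _ = V * B * V := by rw [hRR]
        _ = B * (V * V) := by rw [hVB, mul_assoc]
        _ = B := by rw [hV2, mul_one]
    have hu1 : CFC.sqrt B = R := CFC.sqrt_unique hRR hRnn
    have hu2 : CFC.sqrt B = V * R * V := CFC.sqrt_unique hSS hSnn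
    have hRV : R = V * R * V := hu1 ▸ hu2
    have hVRV : V * R = R * V := by
      calc V * R = V * (V * R * V) := by rw [← hRV]
        _ = (V * V) * (R * V) := by simp only [mul_assoc]
        _ = R * V := by rw [hV2, one_mul]
    have h2 : P * R + P * R = R * P + R * P := by
      have h := hVRV
      rw [hVdef] at h
      simp only [add_mul, mul_add, sub_mul, mul_sub, one_mul, mul_one] at h
      exact sub_left_inj.mp h
    have h3 : (2 : ℂ) • (P * R) = (2 : ℂ) • (R * P) := by
      rw [two_smul, two_smul]; exact h2
    exact (smul_right_injective _ two_ne_zero h3).symm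
  -- final computations
  have hWstar : star W = star T * R := by
    rw [hW, star_mul, hRsa.star_eq]
  have hWW1 : star W * W = 1 := by
    rw [hWstar, hW]
    calc star T * R * (R * T) = star T * (R * R) * T := by simp only [mul_assoc]
      _ = star T * (B * T) := by rw [hRR, mul_assoc]
      _ = star T * (T * B) := by rw [hBT]
      _ = (1 - D) * B := by rw [← mul_assoc, hTstarT]
      _ = 1 := hB1
  have hWW2 : W * star W = 1 := by
    rw [hWstar, hW]
    calc R * T * (star T * R) = R * (T * star T) * R := by simp only [mul_assoc]
      _ = R * (1 - D) * R := by rw [hTTstar]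
      _ = (1 - D) * (R * R) := by rw [hR1D, mul_assoc]
      _ = (1 - D) * B := by rw [hRR]
      _ = 1 := hB1
  constructor
  · exact ⟨hWW1, hWW2⟩
  · rw [hWstar, hW]
    calc R * T * Q * (star T * R) = R * (T * Q) * (star T * R) := by simp only [mul_assoc]
      _ = R * (P * T) * (star T * R) := by rw [← hPT]
      _ = R * P * (T * star T) * R := by simp only [mul_assoc]
      _ = P * R * ((1 - D) * R) := by rw [hRP, hTTstar]; simp only [mul_assoc]
      _ = P * ((1 - D) * (R * R)) := by rw [← mul_assoc, mul_assoc P R (1 - D), hR1D]; simp only [mul_assoc]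
      _ = P * ((1 - D) * B) := by rw [hRR]
      _ = P := by rw [hB1, mul_one]
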